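/- arXiv:1911.06551 — 2 statements merged into one kernel-verified Lean document; each statement's English description precedes it below -/
import Mathlib

section
/- The vanishing-at-infinity subspace V_∞ L^{p,λ}(ℝ^n), consisting of all f ∈ L^{p,λ}(ℝ^n) with lim_{r→∞} sup_{x∈ℝ^n} 𝔐_{p,λ}(f;x,r) = 0, is a closed subspace of L^{p,λ}(ℝ^n) with respect to the Morrey norm. -/
open MeasureTheory Metric Set Filter ENNReal

/-- ℝ≥0∞-valued Morrey modular `𝔐_{p,λ}(f;x,r) = r^{-λ} ∫_{B(x,r)} |f|^p`. -/
noncomputable def modularE {n : ℕ} (p lam : ℝ) (f : EuclideanSpace ℝ (Fin n) → ℝ)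
    (x : EuclideanSpace ℝ (Fin n)) (r : ℝ) : ℝ≥0∞ :=
  ENNReal.ofReal r ^ (-lam) * ∫⁻ y in ball x r, ENNReal.ofReal |f y| ^ p

/-- The `p`-th power of the Morrey norm: `sup_{x, r>0} 𝔐_{p,λ}(f;x,r)`. -/
noncomputable def morreyNormP {n : ℕ} (p lam : ℝ) (f : EuclideanSpace ℝ (Fin n) → ℝ) : ℝ≥0∞ :=
  ⨆ (x : EuclideanSpace ℝ (Fin n)) (r : ℝ) (_ : 0 < r), modularE p lam f x r

/-- Membership in the Morrey space `L^{p,λ}`. -/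
def MemMorrey {n : ℕ} (p lam : ℝ) (f : EuclideanSpace ℝ (Fin n) → ℝ) : Prop :=
  AEStronglyMeasurable f volume ∧ morreyNormP p lam f < ⊤

/-- The vanishing property `(V_∞)`: `sup_x 𝔐_{p,λ}(f;x,r) → 0` as `r → ∞`. -/
def VanishInfty {n : ℕ} (p lam : ℝ) (f : EuclideanSpace ℝ (Fin n) → ℝ) : Prop :=
  Tendsto (fun r : ℝ => ⨆ x : EuclideanSpace ℝ (Fin n), modularE p lam f x r)
    atTop (nhds 0)

/-- Quasi-triangle inequality for the modular. -/
lemma modularE_le_aux {n : ℕ} (p lam : ℝ) (hp : 1 ≤ p)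
    (f g : EuclideanSpace ℝ (Fin n) → ℝ)
    (hg : AEStronglyMeasurable g volume) (hf : AEStronglyMeasurable f volume)
    (x : EuclideanSpace ℝ (Fin n)) (r : ℝ) :
    modularE p lam f x r ≤
      (2 : ℝ≥0∞) ^ (p - 1) *
        (modularE p lam (fun y => g y - f y) x r + modularE p lam g x r) := by
  have hp0 : (0 : ℝ) < p := lt_of_lt_of_le one_pos hp
  set C : ℝ≥0∞ := (2 : ℝ≥0∞) ^ (p - 1) with hC
  have hCne : C ≠ ⊤ := by
    exact (ENNReal.rpow_lt_top_of_nonneg (by linarith) (by norm_num)).ne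
  -- pointwise bound
  have hpt : ∀ y, ENNReal.ofReal |f y| ^ p ≤
      C * (ENNReal.ofReal |g y - f y| ^ p + ENNReal.ofReal |g y| ^ p) := by
    intro y
    have h1 : |f y| ≤ |g y - f y| + |g y| := by
      have : f y = g y - (g y - f y) := by ring
      calc |f y| = |g y - (g y - f y)| := by rw [← this]
        _ ≤ |g y| + |g y - f y| := abs_sub _ _
        _ = |g y - f y| + |g y| := by ring
    have h2 : ENNReal.ofReal |f y| ≤
        ENNReal.ofReal |g y - f y| + ENNReal.ofReal |g y| :=
      le_trans (ENNReal.ofReal_le_ofReal h1) ENNReal.ofReal_add_le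
    calc ENNReal.ofReal |f y| ^ p
        ≤ (ENNReal.ofReal |g y - f y| + ENNReal.ofReal |g y|) ^ p :=
          ENNReal.rpow_le_rpow h2 hp0.le
      _ ≤ C * (ENNReal.ofReal |g y - f y| ^ p + ENNReal.ofReal |g y| ^ p) :=
          ENNReal.rpow_add_le_mul_rpow_add_rpow _ _ hp
  -- measurability of the first summand
  have hA : AEMeasurable (fun y => ENNReal.ofReal |g y - f y| ^ p)
      (volume.restrict (ball x r)) := by
    have h1 : AEMeasurable (fun y => g y - f y) (volume.restrict (ball x r)) :=
      ((hg.sub hf).restrict.aemeasurable)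
    exact ((ENNReal.measurable_ofReal.comp_aemeasurable (continuous_abs.measurable.comp_aemeasurable h1))).pow_const p
  have hint : (∫⁻ y in ball x r, ENNReal.ofReal |f y| ^ p) ≤
      C * ((∫⁻ y in ball x r, ENNReal.ofReal |g y - f y| ^ p) +
        ∫⁻ y in ball x r, ENNReal.ofReal |g y| ^ p) := by
    calc (∫⁻ y in ball x r, ENNReal.ofReal |f y| ^ p)
        ≤ ∫⁻ y in ball x r,
            C * (ENNReal.ofReal |g y - f y| ^ p + ENNReal.ofReal |g y| ^ p) :=
          lintegral_mono fun y => hpt y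
      _ = C * ∫⁻ y in ball x r,
            (ENNReal.ofReal |g y - f y| ^ p + ENNReal.ofReal |g y| ^ p) :=
          lintegral_const_mul' _ _ hCne
      _ = C * ((∫⁻ y in ball x r, ENNReal.ofReal |g y - f y| ^ p) +
            ∫⁻ y in ball x r, ENNReal.ofReal |g y| ^ p) := by
          rw [lintegral_add_left' hA]
  calc modularE p lam f x r
      = ENNReal.ofReal r ^ (-lam) * ∫⁻ y in ball x r, ENNReal.ofReal |f y| ^ p := rfl
    _ ≤ ENNReal.ofReal r ^ (-lam) *
        (C * ((∫⁻ y in ball x r, ENNReal.ofReal |g y - f y| ^ p) +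
          ∫⁻ y in ball x r, ENNReal.ofReal |g y| ^ p)) :=
        mul_le_mul_right hint _
    _ = C * (modularE p lam (fun y => g y - f y) x r + modularE p lam g x r) := by
        simp only [modularE]; ring

/-- `V_∞ L^{p,λ}(ℝⁿ)` is closed in `L^{p,λ}(ℝⁿ)`: if `f_k ∈ V_∞ L^{p,λ}`
converge to `f ∈ L^{p,λ}` in Morrey norm, then `f ∈ V_∞ L^{p,λ}`. -/
theorem vanishInfty_closed {n : ℕ} (p lam : ℝ) (hp : 1 ≤ p) (hlam0 : 0 ≤ lam)
    (hlamn : lam ≤ n)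
    (f : EuclideanSpace ℝ (Fin n) → ℝ) (fk : ℕ → EuclideanSpace ℝ (Fin n) → ℝ)
    (hfk : ∀ k, MemMorrey p lam (fk k)) (hfkV : ∀ k, VanishInfty p lam (fk k))
    (hf : MemMorrey p lam f)
    (hconv : Tendsto (fun k => (morreyNormP p lam (fun y => fk k y - f y)) ^ (1 / p))
      atTop (nhds 0)) :
    VanishInfty p lam f := by
  have hp0 : (0 : ℝ) < p := lt_of_lt_of_le one_pos hp
  rw [VanishInfty, ENNReal.tendsto_nhds_zero]
  intro ε hε
  set C : ℝ≥0∞ := (2 : ℝ≥0∞) ^ (p - 1) with hC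
  have hCne : C ≠ ⊤ :=
    (ENNReal.rpow_lt_top_of_nonneg (by linarith) (by norm_num)).ne
  set δ : ℝ≥0∞ := ε / (2 * C) with hδ
  have hδ0 : 0 < δ :=
    ENNReal.div_pos hε.ne' (ENNReal.mul_ne_top (by norm_num) hCne)
  -- choose k with small difference norm
  obtain ⟨k, hk⟩ : ∃ k, morreyNormP p lam (fun y => fk k y - f y) ≤ δ := by
    have hδp : (0 : ℝ≥0∞) < δ ^ (1 / p) :=
      ENNReal.rpow_pos_of_nonneg hδ0 (by positivity)
    obtain ⟨k, hk⟩ := (hconv.eventually_lt_const hδp).exists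
    refine ⟨k, ?_⟩
    have := ENNReal.rpow_le_rpow hk.le hp0.le
    rwa [← ENNReal.rpow_mul, ← ENNReal.rpow_mul, one_div_mul_cancel hp0.ne',
      ENNReal.rpow_one, ENNReal.rpow_one] at this
  -- eventually the k-th modular sup is small
  have h1 : ∀ᶠ r : ℝ in atTop,
      (⨆ x : EuclideanSpace ℝ (Fin n), modularE p lam (fk k) x r) < δ :=
    (hfkV k).eventually_lt_const hδ0
  filter_upwards [h1, eventually_gt_atTop (0 : ℝ)] with r hr1 hr0
  have key : (⨆ x : EuclideanSpace ℝ (Fin n), modularE p lam f x r) ≤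
      C * (δ + δ) := by
    refine iSup_le fun x => ?_
    have hmod := modularE_le_aux p lam hp f (fk k) (hfk k).1 hf.1 x r
    refine hmod.trans ?_
    gcongr
    · exact hk.trans' (le_iSup_of_le x (le_iSup_of_le r (le_iSup_of_le hr0 le_rfl)))
    · exact (le_iSup (fun x => modularE p lam (fk k) x r) x).trans hr1.le
  refine key.trans ?_
  have : C * (δ + δ) = (2 * C) * (ε / (2 * C)) := by
    rw [hδ, ← two_mul]; ring
  rw [this]
  exact ENNReal.mul_div_le
end

section
/- The subspace V^{(*)} L^{p,λ}(ℝ^n), consisting of all f ∈ L^{p,λ}(ℝ^n) with lim_{N→∞} sup_{x∈ℝ^n} ∫_{B(x,1)} |f(y)|^p χ_{ℝ^n∖B(0,N)}(y) dy = 0, is a closed subspace of L^{p,λ}(ℝ^n) with respect to the Morrey norm. -/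
open MeasureTheory Metric Set Filter ENNReal

/-- `𝒜_{N,p}(f) = sup_x ∫_{B(x,1)} |f(y)|^p χ_{ℝⁿ∖B(0,N)}(y) dy`. -/
noncomputable def AN {n : ℕ} (p : ℝ) (f : EuclideanSpace ℝ (Fin n) → ℝ) (N : ℕ) : ℝ≥0∞ :=
  ⨆ x : EuclideanSpace ℝ (Fin n),
    ∫⁻ y in ball x 1 \ ball (0 : EuclideanSpace ℝ (Fin n)) N, ENNReal.ofReal |f y| ^ p

/-- The vanishing property `(V^*)`: `𝒜_{N,p}(f) → 0` as `N → ∞`. -/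
def VanishStar {n : ℕ} (p : ℝ) (f : EuclideanSpace ℝ (Fin n) → ℝ) : Prop :=
  Tendsto (fun N : ℕ => AN p f N) atTop (nhds 0)


/-! Write `f = f_k - (f_k - f)`. The functional `𝒜_{N,p}` is quasi-subadditive with constant
`2^(p-1)` and is dominated by the Morrey modular at radius `1`, hence by `‖·‖^p`, so
`𝒜_{N,p}(f) ≤ 2^(p-1) (𝒜_{N,p}(f_k) + ‖f_k - f‖^p)`: first take `k` large, then `N`. -/

open Topology

lemma ENNReal.ofReal_abs_sub_rpow_le {p : ℝ} (hp : 1 ≤ p) (a b : ℝ) :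
    ENNReal.ofReal |a - b| ^ p ≤ 2 ^ (p - 1) * (ENNReal.ofReal |a| ^ p + ENNReal.ofReal |b| ^ p) :=
  calc ENNReal.ofReal |a - b| ^ p ≤ (ENNReal.ofReal |a| + ENNReal.ofReal |b|) ^ p := by
        gcongr
        exact (ENNReal.ofReal_le_ofReal (abs_sub a b)).trans ofReal_add_le
    _ ≤ _ := rpow_add_le_mul_rpow_add_rpow _ _ hp

lemma ENNReal.tendsto_zero_of_le_add {α ι : Type*} {l : Filter α} {L : Filter ι} [L.NeBot]
    {a : α → ℝ≥0∞} {b : ι → α → ℝ≥0∞} {c : ι → ℝ≥0∞}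
    (hb : ∀ k, Tendsto (b k) l (𝓝 0)) (hc : Tendsto c L (𝓝 0)) (h : ∀ k x, a x ≤ b k x + c k) :
    Tendsto a l (𝓝 0) := by
  refine ENNReal.tendsto_nhds_zero.2 fun ε hε => ?_
  obtain ⟨k, hk⟩ := (ENNReal.tendsto_nhds_zero.1 hc (ε / 2) (ENNReal.half_pos hε.ne')).exists
  filter_upwards [ENNReal.tendsto_nhds_zero.1 (hb k) (ε / 2) (ENNReal.half_pos hε.ne')] with x hx
  calc a x ≤ b k x + c k := h k x
    _ ≤ ε / 2 + ε / 2 := add_le_add hx hk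
    _ = ε := ENNReal.add_halves ε

section

variable {n : ℕ} {p : ℝ}

lemma AN_sub_le (hp : 1 ≤ p) {f : EuclideanSpace ℝ (Fin n) → ℝ} (hf : AEMeasurable f)
    (g : EuclideanSpace ℝ (Fin n) → ℝ) (N : ℕ) :
    AN p (f - g) N ≤ 2 ^ (p - 1) * (AN p f N + AN p g N) := by
  refine iSup_le fun x => ?_
  have hfp : AEMeasurable (fun y => ENNReal.ofReal |f y| ^ p) :=
    (continuous_abs.measurable.comp_aemeasurable hf).ennreal_ofReal.pow_const p
  calc ∫⁻ y in ball x 1 \ ball 0 N, ENNReal.ofReal |f y - g y| ^ p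
      ≤ ∫⁻ y in ball x 1 \ ball 0 N,
          2 ^ (p - 1) * (ENNReal.ofReal |f y| ^ p + ENNReal.ofReal |g y| ^ p) :=
        lintegral_mono fun y => ENNReal.ofReal_abs_sub_rpow_le hp _ _
    _ = 2 ^ (p - 1) * ((∫⁻ y in ball x 1 \ ball 0 N, ENNReal.ofReal |f y| ^ p)
          + ∫⁻ y in ball x 1 \ ball 0 N, ENNReal.ofReal |g y| ^ p) := by
        rw [lintegral_const_mul' _ _ (rpow_ne_top_of_nonneg (by linarith) ofNat_ne_top),
          lintegral_add_left' hfp.restrict]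
    _ ≤ 2 ^ (p - 1) * (AN p f N + AN p g N) := by
        gcongr <;> exact le_iSup (fun x => ∫⁻ y in ball x 1 \ ball 0 N, _) x

lemma AN_le_morreyNormP (lam : ℝ) (f : EuclideanSpace ℝ (Fin n) → ℝ) (N : ℕ) :
    AN p f N ≤ morreyNormP p lam f := by
  refine iSup_le fun x => ?_
  calc ∫⁻ y in ball x 1 \ ball 0 N, ENNReal.ofReal |f y| ^ p
      ≤ ∫⁻ y in ball x 1, ENNReal.ofReal |f y| ^ p := lintegral_mono_set sdiff_subset
    _ = modularE p lam f x 1 := by simp [modularE]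
    _ ≤ morreyNormP p lam f := le_iSup₂_of_le x (1 : ℝ) (le_iSup_of_le one_pos le_rfl)

end

theorem vanishStar_closed_general {n : ℕ} (p lam : ℝ) (hp : 1 ≤ p)
    (f : EuclideanSpace ℝ (Fin n) → ℝ) (fk : ℕ → EuclideanSpace ℝ (Fin n) → ℝ)
    (hfk : ∀ k, MemMorrey p lam (fk k)) (hfkV : ∀ k, VanishStar p (fk k))
    (hconv : Tendsto (fun k => (morreyNormP p lam (fun y => fk k y - f y)) ^ (1 / p))
      atTop (nhds 0)) :
    VanishStar p f := by
  have hp0 : 0 < p := zero_lt_one.trans_le hp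
  have hdiff : Tendsto (fun k => morreyNormP p lam (fun y => fk k y - f y)) atTop (𝓝 0) := by
    simpa [one_div, hp0.ne', hp0] using hconv.ennrpow_const p
  set C : ℝ≥0∞ := 2 ^ (p - 1)
  have hC : C ≠ ⊤ := rpow_ne_top_of_nonneg (by linarith) ofNat_ne_top
  refine ENNReal.tendsto_zero_of_le_add
    (fun k => by simpa using ENNReal.Tendsto.const_mul (hfkV k) (Or.inr hC))
    (by simpa using ENNReal.Tendsto.const_mul hdiff (Or.inr hC)) fun k N => ?_
  calc AN p f N = AN p (fk k - fun y => fk k y - f y) N := by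
        congr 1; ext y; simp
    _ ≤ C * (AN p (fk k) N + AN p (fun y => fk k y - f y) N) :=
        AN_sub_le hp (hfk k).1.aemeasurable _ N
    _ ≤ C * AN p (fk k) N + C * morreyNormP p lam (fun y => fk k y - f y) := by
        rw [mul_add]
        gcongr
        exact AN_le_morreyNormP lam _ N

/-- `V^{(*)} L^{p,λ}(ℝⁿ)` is closed in `L^{p,λ}(ℝⁿ)`: if `f_k ∈ V^{(*)} L^{p,λ}`
converge to `f ∈ L^{p,λ}` in Morrey norm, then `f ∈ V^{(*)} L^{p,λ}`. -/
theorem vanishStar_closed {n : ℕ} (p lam : ℝ) (hp : 1 ≤ p) (hlam0 : 0 ≤ lam)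
    (hlamn : lam ≤ n)
    (f : EuclideanSpace ℝ (Fin n) → ℝ) (fk : ℕ → EuclideanSpace ℝ (Fin n) → ℝ)
    (hfk : ∀ k, MemMorrey p lam (fk k)) (hfkV : ∀ k, VanishStar p (fk k))
    (hf : MemMorrey p lam f)
    (hconv : Tendsto (fun k => (morreyNormP p lam (fun y => fk k y - f y)) ^ (1 / p))
      atTop (nhds 0)) :
    VanishStar p f :=
  vanishStar_closed_general p lam hp f fk hfk hfkV hconv
end
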